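/- For a disjoint union G = G₁ ⊔ G₂ of two graphs, the LC orbit of G equals the set of disjoint unions G₁' ⊔ G₂' where G₁' ranges over the LC orbit of G₁ and G₂' over the LC orbit of G₂; consequently max over the orbit of G of the independence number equals the sum of the corresponding maxima for G₁ and G₂. -/

import Mathlib

open SimpleGraph

variable {V : Type*}

/-- Local complementation of `G` at `v`: toggle edges between distinct neighbors of `v`. -/
def lc (G : SimpleGraph V) (v : V) : SimpleGraph V where
  Adj x y := x ≠ y ∧
    (((G.Adj v x ∧ G.Adj v y) ∧ ¬ G.Adj x y) ∨ (¬(G.Adj v x ∧ G.Adj v y) ∧ G.Adj x y))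
  symm := ⟨by
    rintro x y ⟨hxy, h⟩
    refine ⟨hxy.symm, ?_⟩
    rcases h with ⟨⟨ha, hb⟩, hc⟩ | ⟨ha, hb⟩
    · exact Or.inl ⟨⟨hb, ha⟩, fun h' => hc h'.symm⟩
    · exact Or.inr ⟨fun h' => ha ⟨h'.2, h'.1⟩, hb.symm⟩⟩
  loopless := ⟨fun x h => h.1 rfl⟩

/-- `lcEquiv G H` iff `H` is obtained from `G` by a finite sequence of local complementations. -/
def lcEquiv (G H : SimpleGraph V) : Prop := ∃ l : List V, H = l.foldl lc G

/-- `H` is a vertex-minor of `G`: `H` is isomorphic to an induced subgraph of a member of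
the LC orbit of `G`. -/
def IsVertexMinor {W : Type*} (H : SimpleGraph W) (G : SimpleGraph V) : Prop :=
  ∃ G' : SimpleGraph V, lcEquiv G G' ∧ ∃ s : Set V, Nonempty (H ≃g G'.induce s)

/-- `s` is an independent set of `G`. -/
def IsIndep (G : SimpleGraph V) (s : Set V) : Prop := s.Pairwise (fun a b => ¬ G.Adj a b)

/-- The independence number of `G`. -/
noncomputable def indepNum (G : SimpleGraph V) : ℕ :=
  sSup {n | ∃ s : Finset V, IsIndep G ↑s ∧ s.card = n}

/-- Maximum independence number over the LC orbit of `G`. -/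
noncomputable def lcBeta (G : SimpleGraph V) : ℕ :=
  sSup {n | ∃ G' : SimpleGraph V, lcEquiv G G' ∧ ∃ s : Finset V, IsIndep G' ↑s ∧ s.card = n}

/-!
All neighbours of a vertex of `G₁ ⊕g G₂` lie in its own summand, so local complementation at
`inl a` is local complementation at `a` in `G₁`, leaving `G₂` untouched (and symmetrically).
Hence a sequence of local complementations of the sum is the same thing as one sequence on each
side, which identifies the orbits. An independent set of `H₁ ⊕g H₂` is the disjoint union of
independent sets of `H₁` and `H₂`, so the maximal independent-set size over the orbit is additive.
-/

namespace SimpleGraph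

variable {α β : Type*}

lemma lc_sum_inl (G₁ : SimpleGraph α) (G₂ : SimpleGraph β) (a : α) :
    lc (G₁ ⊕g G₂) (.inl a) = lc G₁ a ⊕g G₂ := by
  ext x y
  cases x <;> cases y <;> simp [lc]
  exact Adj.ne

lemma lc_sum_inr (G₁ : SimpleGraph α) (G₂ : SimpleGraph β) (b : β) :
    lc (G₁ ⊕g G₂) (.inr b) = G₁ ⊕g lc G₂ b := by
  ext x y
  cases x <;> cases y <;> simp [lc]
  exact Adj.ne

lemma foldl_lc_map_inl (l : List α) (G₁ : SimpleGraph α) (G₂ : SimpleGraph β) :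
    (l.map .inl).foldl lc (G₁ ⊕g G₂) = l.foldl lc G₁ ⊕g G₂ := by
  induction l generalizing G₁ with
  | nil => rfl
  | cons a l ih => simp [lc_sum_inl, ih]

lemma foldl_lc_map_inr (l : List β) (G₁ : SimpleGraph α) (G₂ : SimpleGraph β) :
    (l.map .inr).foldl lc (G₁ ⊕g G₂) = G₁ ⊕g l.foldl lc G₂ := by
  induction l generalizing G₂ with
  | nil => rfl
  | cons b l ih => simp [lc_sum_inr, ih]

lemma exists_foldl_lc_sum (l : List (α ⊕ β)) (G₁ : SimpleGraph α) (G₂ : SimpleGraph β) :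
    ∃ (l₁ : List α) (l₂ : List β),
      l.foldl lc (G₁ ⊕g G₂) = l₁.foldl lc G₁ ⊕g l₂.foldl lc G₂ := by
  induction l generalizing G₁ G₂ with
  | nil => exact ⟨[], [], rfl⟩
  | cons v l ih =>
    cases v with
    | inl a =>
      obtain ⟨l₁, l₂, h⟩ := ih (lc G₁ a) G₂
      exact ⟨a :: l₁, l₂, by simpa [lc_sum_inl] using h⟩
    | inr b =>
      obtain ⟨l₁, l₂, h⟩ := ih G₁ (lc G₂ b)
      exact ⟨l₁, b :: l₂, by simpa [lc_sum_inr] using h⟩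

lemma lcEquiv_sum_iff {G₁ : SimpleGraph α} {G₂ : SimpleGraph β} {H : SimpleGraph (α ⊕ β)} :
    lcEquiv (G₁ ⊕g G₂) H ↔
      ∃ (H₁ : SimpleGraph α) (H₂ : SimpleGraph β),
        lcEquiv G₁ H₁ ∧ lcEquiv G₂ H₂ ∧ H = H₁ ⊕g H₂ := by
  constructor
  · rintro ⟨l, rfl⟩
    obtain ⟨l₁, l₂, h⟩ := exists_foldl_lc_sum l G₁ G₂
    exact ⟨_, _, ⟨l₁, rfl⟩, ⟨l₂, rfl⟩, h⟩
  · rintro ⟨H₁, H₂, ⟨l₁, rfl⟩, ⟨l₂, rfl⟩, rfl⟩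
    refine ⟨l₁.map .inl ++ l₂.map .inr, ?_⟩
    rw [List.foldl_append, foldl_lc_map_inl, foldl_lc_map_inr]

lemma IsIndep.comap {G : SimpleGraph α} {H : SimpleGraph β} {s : Set β} (hs : IsIndep H s)
    (f : G ↪g H) : IsIndep G (f ⁻¹' s) :=
  fun _ hx _ hy hne hadj => hs hx hy (f.injective.ne hne) (f.map_adj_iff.mpr hadj)

lemma IsIndep.disjSum {G₁ : SimpleGraph α} {G₂ : SimpleGraph β} {s₁ : Finset α}
    {s₂ : Finset β} (h₁ : IsIndep G₁ ↑s₁) (h₂ : IsIndep G₂ ↑s₂) :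
    IsIndep (G₁ ⊕g G₂) ↑(s₁.disjSum s₂) := by
  rintro (x | x) hx (y | y) hy hne
  · rw [Finset.mem_coe, Finset.inl_mem_disjSum] at hx hy
    exact h₁ hx hy (by simpa using hne)
  · simp
  · simp
  · rw [Finset.mem_coe, Finset.inr_mem_disjSum] at hx hy
    exact h₂ hx hy (by simpa using hne)

lemma IsIndep.toLeft {G₁ : SimpleGraph α} {G₂ : SimpleGraph β} {s : Finset (α ⊕ β)}
    (hs : IsIndep (G₁ ⊕g G₂) ↑s) : IsIndep G₁ ↑s.toLeft := by
  convert hs.comap Embedding.sumInl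
  ext; simp

lemma IsIndep.toRight {G₁ : SimpleGraph α} {G₂ : SimpleGraph β} {s : Finset (α ⊕ β)}
    (hs : IsIndep (G₁ ⊕g G₂) ↑s) : IsIndep G₂ ↑s.toRight := by
  convert hs.comap Embedding.sumInr
  ext; simp

section lcBeta

variable {V : Type*} {G G' : SimpleGraph V}

/-- `lcBeta G` unfolds to `sSup (lcIndepCards G)`. -/
def lcIndepCards (G : SimpleGraph V) : Set ℕ :=
  {n | ∃ G' : SimpleGraph V, lcEquiv G G' ∧ ∃ s : Finset V, IsIndep G' ↑s ∧ s.card = n}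

lemma zero_mem_lcIndepCards (G : SimpleGraph V) : 0 ∈ lcIndepCards G :=
  ⟨G, ⟨[], rfl⟩, ∅, by simp [IsIndep]⟩

lemma lcBeta_le {n : ℕ}
    (h : ∀ G' (s : Finset V), lcEquiv G G' → IsIndep G' ↑s → s.card ≤ n) : lcBeta G ≤ n :=
  csSup_le ⟨0, zero_mem_lcIndepCards G⟩ fun _ ⟨G', hG', s, hs, hn⟩ => hn ▸ h G' s hG' hs

variable [Finite V]

lemma bddAbove_lcIndepCards (G : SimpleGraph V) : BddAbove (lcIndepCards G) := by
  have := Fintype.ofFinite V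
  exact ⟨Fintype.card V, fun _ ⟨_, _, s, _, hn⟩ => hn ▸ s.card_le_univ⟩

lemma le_lcBeta {s : Finset V} (hG : lcEquiv G G') (hs : IsIndep G' ↑s) : s.card ≤ lcBeta G :=
  le_csSup (bddAbove_lcIndepCards G) ⟨G', hG, s, hs, rfl⟩

lemma exists_isIndep_card_eq_lcBeta (G : SimpleGraph V) :
    ∃ G', lcEquiv G G' ∧ ∃ s : Finset V, IsIndep G' ↑s ∧ s.card = lcBeta G :=
  Nat.sSup_mem ⟨0, zero_mem_lcIndepCards G⟩ (bddAbove_lcIndepCards G)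

end lcBeta

end SimpleGraph

theorem lc_orbit_sum {α β : Type*} [Fintype α] [Fintype β]
    (G₁ : SimpleGraph α) (G₂ : SimpleGraph β) :
    {H | lcEquiv (G₁ ⊕g G₂) H} =
      {H | ∃ (H₁ : SimpleGraph α) (H₂ : SimpleGraph β),
        lcEquiv G₁ H₁ ∧ lcEquiv G₂ H₂ ∧ H = H₁ ⊕g H₂} ∧
    lcBeta (G₁ ⊕g G₂) = lcBeta G₁ + lcBeta G₂ := by
  refine ⟨Set.ext fun _ => lcEquiv_sum_iff, le_antisymm ?_ ?_⟩
  · refine lcBeta_le fun H s hH hs => ?_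
    obtain ⟨H₁, H₂, hH₁, hH₂, rfl⟩ := lcEquiv_sum_iff.mp hH
    rw [← Finset.card_toLeft_add_card_toRight]
    exact add_le_add (le_lcBeta hH₁ hs.toLeft) (le_lcBeta hH₂ hs.toRight)
  · obtain ⟨H₁, hH₁, s₁, hs₁, hc₁⟩ := exists_isIndep_card_eq_lcBeta G₁
    obtain ⟨H₂, hH₂, s₂, hs₂, hc₂⟩ := exists_isIndep_card_eq_lcBeta G₂
    rw [← hc₁, ← hc₂, ← Finset.card_disjSum]
    exact le_lcBeta (G' := H₁ ⊕g H₂) (lcEquiv_sum_iff.mpr ⟨H₁, H₂, hH₁, hH₂, rfl⟩)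
      (hs₁.disjSum hs₂)
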